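/- arXiv:1708.06480 — 6 statements merged into one kernel-verified Lean document; each statement's English description precedes it below -/
import Mathlib

section
/- Let H_S(q,p,t) = p²/4 - tq² - q⁴ and suppose (q,p) solve p' = -∂H_S/∂q, q' = ∂H_S/∂p on ℝ. Define S(t) = (1/3)(2t·H_S(q(t),p(t),t) - p(t)q(t)) - ∫ₜ^∞ (p(s)q'(s) - H_S(q(s),p(s),s)) ds (assuming the integral converges). Then d/dt S(t) = H_S(q(t),p(t),t). -/
/-!
Along a solution of the Hamiltonian system the energy changes only through its explicit time
dependence, `d/dt H_S = ∂H_S/∂t = -q²`. With this, differentiating `(2tH_S - pq)/3` gives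
`-2tq² - 2q⁴`, while the Lagrangian `pq' - H_S` equals `p²/4 + tq² + q⁴`; their sum is `H_S`.
-/

/-- The soft-edge Hamiltonian `H_S(q,p,t) = p²/4 - t q² - q⁴`. -/
noncomputable def HS (q p t : ℝ) : ℝ := p ^ 2 / 4 - t * q ^ 2 - q ^ 4

theorem HasDerivAt.HS {q p : ℝ → ℝ} {q' p' t : ℝ} (hq : HasDerivAt q q' t)
    (hp : HasDerivAt p p' t) :
    HasDerivAt (fun τ => HS (q τ) (p τ) τ)
      (p t * p' / 2 - q t ^ 2 - 2 * t * q t * q' - 4 * q t ^ 3 * q') t := by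
  have h := (((hp.pow 2).div_const 4).sub ((hasDerivAt_id t).mul (hq.pow 2))).sub (hq.pow 4)
  refine h.congr_deriv ?_
  simp only [id, Pi.pow_apply, Nat.cast_ofNat]
  ring

theorem hasDerivAt_HS_of_hamiltonian {q p : ℝ → ℝ} {t : ℝ} (hq : HasDerivAt q (p t / 2) t)
    (hp : HasDerivAt p (2 * t * q t + 4 * q t ^ 3) t) :
    HasDerivAt (fun τ => HS (q τ) (p τ) τ) (-q t ^ 2) t :=
  (hq.HS hp).congr_deriv (by ring)

/-- with `S(t) = (1/3)(2t·H_S(q,p,t) - pq) - ∫ₜ^∞ (p q' - H_S) ds` (the improper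
integral `J` being assumed to exist and be differentiable with derivative
`-(p(t)q'(t) - H_S(q(t),p(t),t))`), where `(q,p)` solve the Hamiltonian system for `H_S`
on `ℝ`, one has `dS/dt = H_S(q(t),p(t),t)`. -/
theorem extended_JMU_soft_edge_derivative
    (q p J : ℝ → ℝ)
    (hq : ∀ t : ℝ, HasDerivAt q (p t / 2) t)
    (hp : ∀ t : ℝ, HasDerivAt p (2 * t * q t + 4 * (q t) ^ 3) t)
    (hJ : ∀ t : ℝ, HasDerivAt J (-(p t * deriv q t - HS (q t) (p t) t)) t)
    (t : ℝ) :
    HasDerivAt (fun τ : ℝ => (1 / 3) * (2 * τ * HS (q τ) (p τ) τ - p τ * q τ) - J τ)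
      (HS (q t) (p t) t) t := by
  have hH := hasDerivAt_HS_of_hamiltonian (hq t) (hp t)
  have hS₀ := ((((hasDerivAt_id t).const_mul 2).mul hH).sub ((hp t).mul (hq t))).const_mul
    ((1 : ℝ) / 3)
  refine (hS₀.sub (hJ t)).congr_deriv ?_
  rw [(hq t).deriv]
  simp only [HS, id]
  ring
end

section
/- For z ∈ ℂ with Re z > -1, ∫₀^z log Γ(1+t) dt = (z/2)·log(2π) - z(z+1)/2 + z·log Γ(1+z) - log G(1+z), where G is the Barnes G-function. -/
open Real

/-- The principal branch of `log Γ(1+z)`, via the Weierstrass product: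
`log Γ(1+z) = -γ_E z + Σ_{k≥1} (z/k - log(1+z/k))`. -/
noncomputable def logGammaOnePlus (z : ℂ) : ℂ :=
  -(Real.eulerMascheroniConstant : ℂ) * z +
    ∑' k : ℕ, (z / ((k : ℂ) + 1) - Complex.log (1 + z / ((k : ℂ) + 1)))

/-- The principal branch of `log G(1+z)` for the Barnes G-function, via its Weierstrass
product: `G(1+z) = (2π)^{z/2} exp(-(z+z²(1+γ_E))/2) Π_{k≥1} (1+z/k)^k exp(z²/(2k) - z)`,
which satisfies `G(1) = 1` and `G(z+1) = Γ(z) G(z)`. -/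
noncomputable def logBarnesGOnePlus (z : ℂ) : ℂ :=
  z / 2 * Complex.log (2 * Real.pi) - (z + z ^ 2 * (1 + (Real.eulerMascheroniConstant : ℂ))) / 2 +
    ∑' k : ℕ, (((k : ℂ) + 1) * Complex.log (1 + z / ((k : ℂ) + 1)) +
      z ^ 2 / (2 * ((k : ℂ) + 1)) - z)

/-! Integrate the Weierstrass series of `log Γ(1+t)` termwise along the segment `[0, z]`.
Since `Re z > -1`, every `1 + t/k` stays in the right half-plane, so the term `t/k - log(1+t/k)`
has the primitive `t²/(2k) - (k+t) log(1+t/k) + t` there; the interchange of sum and integral is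
justified by `‖w/k - log(1+w/k)‖ ≤ ‖w‖²/k²` for `k ≥ 2‖w‖`. The resulting series differs termwise
from the one defining `log G(1+z)` by `z (z/k - log(1+z/k))`, which sums to `z log Γ(1+z)` up to
the `γ` terms. -/

open MeasureTheory Set

theorem integral_add_tsum_of_summable_integral_norm {α E : Type*} [MeasurableSpace α]
    {μ : Measure α} [NormedAddCommGroup E] [NormedSpace ℝ E] [CompleteSpace E]
    {g : α → E} {F : ℕ → α → E} (hg : Integrable g μ) (hF : ∀ n, Integrable (F n) μ)
    (hF_sum : Summable fun n ↦ ∫ a, ‖F n a‖ ∂μ) (hF_pt : ∀ a, Summable (F · a)) :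
    ∫ a, (g a + ∑' n, F n a) ∂μ = ∫ a, g a ∂μ + ∑' n, ∫ a, F n a ∂μ := by
  let G : ℕ → α → E := fun
    | 0 => g
    | n + 1 => F n
  have hG : HasSum (fun n ↦ ∫ a, G n a ∂μ) (∫ a, ∑' n, G n a ∂μ) :=
    hasSum_integral_of_summable_integral_norm (by rintro (_ | n) <;> simp [G, hg, hF])
      ((summable_nat_add_iff 1).mp hF_sum)
  have hG_pt : ∀ a, ∑' n, G n a = g a + ∑' n, F n a := fun a ↦ tsum_eq_zero_add' (hF_pt a)
  simp only [hG_pt] at hG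
  exact hG.tsum_eq.symm.trans (tsum_eq_zero_add'
    (hF_sum.of_norm_bounded fun n ↦ norm_integral_le_integral_norm _))

theorem integral_mul_comp_ofReal_mul_eq_sub_of_hasDerivAt {f F : ℂ → ℂ} {z : ℂ}
    (hF : ∀ s ∈ Icc (0 : ℝ) 1, HasDerivAt F (f (s * z)) (s * z))
    (hf : ContinuousOn (fun s : ℝ ↦ f (s * z)) (Icc 0 1)) :
    ∫ s in (0 : ℝ)..1, z * f (s * z) = F z - F 0 := by
  have hderiv : ∀ s ∈ uIcc (0 : ℝ) 1, HasDerivAt (fun s : ℝ ↦ F (s * z)) (z * f (s * z)) s := by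
    intro s hs
    rw [uIcc_of_le zero_le_one] at hs
    have := (hF s hs).comp (s : ℂ) ((hasDerivAt_id (s : ℂ)).mul_const z)
    simpa [mul_comm] using this.comp_ofReal
  have hint : IntervalIntegrable (fun s : ℝ ↦ z * f (s * z)) volume 0 1 :=
    (continuousOn_const.mul hf).intervalIntegrable_of_Icc zero_le_one
  simpa using intervalIntegral.integral_eq_sub_of_hasDerivAt hderiv hint

theorem Complex.one_add_ofReal_mul_mem_slitPlane {z : ℂ} (hz : -1 < z.re) {t : ℝ}
    (ht : t ∈ Icc (0 : ℝ) 1) : 1 + t * z ∈ slitPlane := by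
  refine mem_slitPlane_iff.mpr (Or.inl ?_)
  simp only [add_re, one_re, re_ofReal_mul]
  rcases ht.1.eq_or_lt with rfl | ht₀
  · simp
  · nlinarith [mul_pos ht₀ (by linarith : 0 < z.re + 1), ht.2]

theorem Complex.norm_sub_log_one_add_le_sq {a : ℂ} (ha : ‖a‖ ≤ 1 / 2) :
    ‖a - log (1 + a)‖ ≤ ‖a‖ ^ 2 :=
  calc ‖a - log (1 + a)‖ = ‖log (1 + a) - a‖ := norm_sub_rev _ _
    _ ≤ ‖a‖ ^ 2 * (1 - ‖a‖)⁻¹ / 2 := norm_log_one_add_sub_self_le (by linarith)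
    _ ≤ ‖a‖ ^ 2 * 2 / 2 := by
      gcongr
      rw [inv_le_comm₀ (by linarith) (by norm_num)]
      linarith
    _ = ‖a‖ ^ 2 := by ring

theorem summable_sq_div_nat_add_one_sq (R : ℝ) :
    Summable fun n : ℕ ↦ R ^ 2 / ((n : ℝ) + 1) ^ 2 := by
  have := (summable_nat_add_iff 1).mpr (Real.summable_one_div_nat_pow.mpr one_lt_two)
  simpa [div_eq_mul_one_div (R ^ 2)] using this.mul_left (R ^ 2)

/-- The term `w/k - log(1 + w/k)` of the Weierstrass series of `log Γ(1+w)`, at `k = n + 1`. -/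
noncomputable def weierstrassTerm (w : ℂ) (n : ℕ) : ℂ :=
  w / (n + 1) - Complex.log (1 + w / (n + 1))

noncomputable def weierstrassTermPrimitive (n : ℕ) (w : ℂ) : ℂ :=
  w ^ 2 / (2 * (n + 1)) - (n + 1 + w) * Complex.log (1 + w / (n + 1)) + w

section WeierstrassTerm

variable {w z : ℂ} {n : ℕ}

theorem norm_weierstrassTerm_le {R : ℝ} (hw : ‖w‖ ≤ R) (hn : 2 * R ≤ n + 1) :
    ‖weierstrassTerm w n‖ ≤ R ^ 2 / ((n : ℝ) + 1) ^ 2 := by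
  have hn₀ : (0 : ℝ) < n + 1 := by positivity
  have hnorm : ‖w / (n + 1)‖ ≤ R / (n + 1) := by
    rw [norm_div, show ((n : ℂ) + 1) = ((n + 1 : ℝ) : ℂ) by push_cast; ring, Complex.norm_real,
      Real.norm_of_nonneg hn₀.le]
    gcongr
  have hhalf : R / (n + 1) ≤ 1 / 2 := by
    rw [div_le_div_iff₀ hn₀ two_pos]
    linarith
  calc ‖weierstrassTerm w n‖ ≤ ‖w / (n + 1)‖ ^ 2 :=
        Complex.norm_sub_log_one_add_le_sq (hnorm.trans hhalf)
    _ ≤ (R / (n + 1)) ^ 2 := by gcongr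
    _ = R ^ 2 / ((n : ℝ) + 1) ^ 2 := div_pow _ _ _

theorem eventually_norm_weierstrassTerm_le (R : ℝ) :
    ∀ᶠ n in Filter.cofinite, ∀ w : ℂ, ‖w‖ ≤ R →
      ‖weierstrassTerm w n‖ ≤ R ^ 2 / ((n : ℝ) + 1) ^ 2 := by
  rw [Nat.cofinite_eq_atTop]
  filter_upwards [Filter.eventually_ge_atTop ⌈2 * R⌉₊] with n hn w hw
  refine norm_weierstrassTerm_le hw ?_
  linarith [Nat.ceil_le.mp hn]

theorem summable_weierstrassTerm (w : ℂ) : Summable (weierstrassTerm w) :=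
  .of_norm_bounded_eventually (summable_sq_div_nat_add_one_sq ‖w‖)
    ((eventually_norm_weierstrassTerm_le ‖w‖).mono fun _ h ↦ h w le_rfl)

theorem one_add_ofReal_mul_div_mem_slitPlane (hz : -1 < z.re) (n : ℕ) {s : ℝ}
    (hs : s ∈ Icc (0 : ℝ) 1) :
    1 + s * z / (n + 1) ∈ Complex.slitPlane := by
  have hn₀ : (0 : ℝ) < n + 1 := by positivity
  have ht : s / (n + 1) ∈ Icc (0 : ℝ) 1 :=
    ⟨by have := hs.1; positivity, (div_le_one hn₀).mpr (by linarith [hs.2])⟩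
  convert Complex.one_add_ofReal_mul_mem_slitPlane hz ht using 2
  push_cast
  ring

theorem hasDerivAt_weierstrassTermPrimitive (hw : 1 + w / (n + 1) ∈ Complex.slitPlane) :
    HasDerivAt (weierstrassTermPrimitive n) (weierstrassTerm w n) w := by
  have hn : (n : ℂ) + 1 ≠ 0 := Nat.cast_add_one_ne_zero n
  have hcw : (n : ℂ) + 1 + w ≠ 0 := fun h ↦
    Complex.slitPlane_ne_zero hw (by rw [one_add_div hn, h, zero_div])
  have hinner : HasDerivAt (fun v : ℂ ↦ 1 + v / (n + 1)) (1 / (n + 1)) w :=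
    ((hasDerivAt_id w).div_const _).const_add 1
  have hlog := (Complex.hasDerivAt_log hw).comp w hinner
  have hsq : HasDerivAt (fun v : ℂ ↦ v ^ 2 / (2 * (n + 1))) (2 * w / (2 * (n + 1))) w := by
    simpa using (hasDerivAt_pow 2 w).div_const (2 * ((n : ℂ) + 1))
  refine ((hsq.sub (((hasDerivAt_id w).const_add ((n : ℂ) + 1)).mul hlog)).add
    (hasDerivAt_id w)).congr_deriv ?_
  have hcancel : ((n : ℂ) + 1 + w) * ((1 + w / (n + 1))⁻¹ * (1 / (n + 1))) = 1 := by
    field_simp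
  simp only [Function.comp_apply, id, hcancel, weierstrassTerm]
  field_simp
  ring

theorem continuousOn_weierstrassTerm_segment (hz : -1 < z.re) (n : ℕ) :
    ContinuousOn (fun s : ℝ ↦ weierstrassTerm (s * z) n) (Icc 0 1) := by
  have hlin : Continuous fun s : ℝ ↦ (s : ℂ) * z / (n + 1) :=
    (Complex.continuous_ofReal.mul continuous_const).div_const _
  exact hlin.continuousOn.sub ((continuous_const.add hlin).continuousOn.clog
    fun s hs ↦ one_add_ofReal_mul_div_mem_slitPlane hz n hs)

theorem integral_weierstrassTerm_segment (hz : -1 < z.re) (n : ℕ) :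
    ∫ s in (0 : ℝ)..1, z * weierstrassTerm (s * z) n = weierstrassTermPrimitive n z := by
  rw [integral_mul_comp_ofReal_mul_eq_sub_of_hasDerivAt (f := (weierstrassTerm · n))
    (fun s hs ↦ hasDerivAt_weierstrassTermPrimitive (one_add_ofReal_mul_div_mem_slitPlane hz n hs))
    (continuousOn_weierstrassTerm_segment hz n)]
  simp [weierstrassTermPrimitive]

end WeierstrassTerm

theorem logGammaOnePlus_eq (z : ℂ) :
    logGammaOnePlus z = -(eulerMascheroniConstant : ℂ) * z + ∑' n, weierstrassTerm z n := rfl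

theorem summable_integral_norm_weierstrassTerm_segment (z : ℂ) :
    Summable fun n ↦ ∫ s in Ioc (0 : ℝ) 1, ‖z * weierstrassTerm (s * z) n‖ := by
  refine .of_norm_bounded_eventually ((summable_sq_div_nat_add_one_sq ‖z‖).mul_left ‖z‖) ?_
  filter_upwards [eventually_norm_weierstrassTerm_le ‖z‖] with n hn
  have hbound : ∀ s ∈ Ioc (0 : ℝ) 1,
      ‖‖z * weierstrassTerm (s * z) n‖‖ ≤ ‖z‖ * (‖z‖ ^ 2 / ((n : ℝ) + 1) ^ 2) := by
    intro s hs
    rw [norm_norm, norm_mul]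
    refine mul_le_mul_of_nonneg_left (hn _ ?_) (norm_nonneg z)
    rw [norm_mul, Complex.norm_real, Real.norm_of_nonneg hs.1.le]
    exact mul_le_of_le_one_left (norm_nonneg z) hs.2
  simpa using norm_integral_le_of_norm_le_const
    (ae_restrict_of_forall_mem (μ := volume) measurableSet_Ioc hbound)

theorem integral_logGammaOnePlus_segment {z : ℂ} (hz : -1 < z.re) :
    ∫ s in (0 : ℝ)..1, z * logGammaOnePlus (s * z) =
      -(eulerMascheroniConstant : ℂ) * z ^ 2 / 2 + ∑' n, weierstrassTermPrimitive n z := by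
  set γ : ℂ := (eulerMascheroniConstant : ℂ)
  have hγ : ∫ s in (0 : ℝ)..1, z * (-γ * (s * z)) = -γ * z ^ 2 / 2 := by
    rw [integral_mul_comp_ofReal_mul_eq_sub_of_hasDerivAt (f := (-γ * ·)) (F := (-γ * · ^ 2 / 2))
      (fun s _ ↦ (((hasDerivAt_pow 2 _).const_mul _).div_const 2).congr_deriv (by ring))
      (by fun_prop)]
    ring
  have hint : ∀ n, IntegrableOn (fun s : ℝ ↦ z * weierstrassTerm (s * z) n) (Ioc 0 1) :=
    fun n ↦ ((continuousOn_const.mul (continuousOn_weierstrassTerm_segment hz n)).integrableOn_Icc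
      ).mono_set Ioc_subset_Icc_self
  calc ∫ s in (0 : ℝ)..1, z * logGammaOnePlus (s * z)
      = ∫ s in Ioc (0 : ℝ) 1, (z * (-γ * (s * z)) + ∑' n, z * weierstrassTerm (s * z) n) := by
        simp only [intervalIntegral.integral_of_le zero_le_one, logGammaOnePlus_eq, mul_add,
          tsum_mul_left, γ]
    _ = (∫ s in Ioc (0 : ℝ) 1, z * (-γ * (s * z))) +
          ∑' n, ∫ s in Ioc (0 : ℝ) 1, z * weierstrassTerm (s * z) n :=
        integral_add_tsum_of_summable_integral_norm
          (by fun_prop : Continuous fun s : ℝ ↦ z * (-γ * (s * z))).integrableOn_Ioc hint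
          (summable_integral_norm_weierstrassTerm_segment z)
          fun s ↦ (summable_weierstrassTerm _).mul_left z
    _ = -γ * z ^ 2 / 2 + ∑' n, weierstrassTermPrimitive n z := by
        simp only [← intervalIntegral.integral_of_le zero_le_one, hγ,
          integral_weierstrassTerm_segment hz]

theorem summable_weierstrassTermPrimitive {z : ℂ} (hz : -1 < z.re) :
    Summable fun n ↦ weierstrassTermPrimitive n z := by
  refine ((summable_integral_norm_weierstrassTerm_segment z).of_norm_bounded
    fun n ↦ norm_integral_le_integral_norm _).congr fun n ↦ ?_
  rw [← intervalIntegral.integral_of_le zero_le_one, integral_weierstrassTerm_segment hz]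

theorem logBarnesGOnePlus_eq {z : ℂ} (hz : -1 < z.re) :
    logBarnesGOnePlus z = z / 2 * Complex.log (2 * π) -
      (z + z ^ 2 * (1 + (eulerMascheroniConstant : ℂ))) / 2 +
        z * ∑' n, weierstrassTerm z n - ∑' n, weierstrassTermPrimitive n z := by
  have hterm : ∀ n : ℕ, ((n : ℂ) + 1) * Complex.log (1 + z / (n + 1)) + z ^ 2 / (2 * (n + 1)) - z =
      z * weierstrassTerm z n - weierstrassTermPrimitive n z := by
    intro n
    have hn : (n : ℂ) + 1 ≠ 0 := Nat.cast_add_one_ne_zero n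
    simp only [weierstrassTerm, weierstrassTermPrimitive]
    field_simp
    ring
  rw [logBarnesGOnePlus, tsum_congr hterm, ((summable_weierstrassTerm z).mul_left z).tsum_sub
    (summable_weierstrassTermPrimitive hz), tsum_mul_left, add_sub_assoc]

/-- for `Re z > -1`,
`∫₀^z log Γ(1+t) dt = (z/2) log(2π) - z(z+1)/2 + z log Γ(1+z) - log G(1+z)`,
the integral being taken along the straight path from `0` to `z`. -/
theorem integral_logGamma_eq_barnesG (z : ℂ) (hz : -1 < z.re) :
    (∫ s in (0 : ℝ)..1, z * logGammaOnePlus ((s : ℂ) * z)) =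
      z / 2 * Complex.log (2 * Real.pi) - z * (z + 1) / 2 +
        z * logGammaOnePlus z - logBarnesGOnePlus z := by
  rw [integral_logGammaOnePlus_segment hz, logBarnesGOnePlus_eq hz, logGammaOnePlus_eq]
  ring
end

section
/- Suppose σ is meromorphic near t₀ > 0 and σ(t) = c/(t-t₀) + O(t-t₀) as t → t₀ with c ≠ 0, and σ satisfies the requirement that t(q²-1)(tq_t)_t = q(tq_t)² + (1/4)(t-α²)q + (1/4)tq³(q²-2) with q = σ having a simple pole at t₀. Then the Laurent expansion forces c² = 4t₀. -/
/-!
Near the pole write `q = A/ε`, `q' = B/ε²`, `q'' = C/ε³` with `ε = t - t₀`; then `A → c`,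
`B → -c`, `C → 2c`. Multiplying the equation by `ε⁵` turns it into a polynomial identity in
`t, ε, A, B, C`, and letting `t → t₀` leaves `2t₀²c³ = t₀²c³ + t₀c⁵/4`, i.e. `c² = 4t₀`.
-/

open Filter Metric Set Topology

section PolePart

variable {𝕜 : Type*} [NontriviallyNormedField 𝕜] {a c : 𝕜} {n : ℕ} {U : Set 𝕜} {q r : 𝕜 → 𝕜}

theorem hasDerivAt_div_sub_pow (c a : 𝕜) (n : ℕ) {t : 𝕜} (ht : t ≠ a) :
    HasDerivAt (fun s => c / (s - a) ^ n) (-(n * c) / (t - a) ^ (n + 1)) t := by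
  have h := (((hasDerivAt_id' t).sub_const a).fun_pow n).fun_inv
    (pow_ne_zero n (sub_ne_zero.2 ht)) |>.const_mul c
  simp only [← div_eq_mul_inv, mul_one] at h
  refine h.congr_deriv ?_
  rcases n with _ | n
  · simp
  · field_simp
    push_cast
    ring

theorem hasDerivAt_of_eqOn_div_sub_pow_add (hU : IsOpen U) (haU : a ∉ U)
    (hr : DifferentiableOn 𝕜 r U) (hq : EqOn q (fun s => c / (s - a) ^ n + r s) U)
    ⦃t : 𝕜⦄ (ht : t ∈ U) :
    HasDerivAt q (-(n * c) / (t - a) ^ (n + 1) + deriv r t) t :=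
  ((hasDerivAt_div_sub_pow c a n (ne_of_mem_of_not_mem ht haU)).add
    (hr.differentiableAt (hU.mem_nhds ht)).hasDerivAt).congr_of_eventuallyEq
    (eventuallyEq_of_mem (hU.mem_nhds ht) hq)

theorem tendsto_sub_pow_mul_of_eqOn_div_sub_pow_add (hn : n ≠ 0) (hU : U ∈ 𝓝[≠] a)
    (hr : ContinuousAt r a) (hq : EqOn q (fun s => c / (s - a) ^ n + r s) U) :
    Tendsto (fun s => (s - a) ^ n * q s) (𝓝[≠] a) (𝓝 c) := by
  have hcont : ContinuousAt (fun s => c + (s - a) ^ n * r s) a := by fun_prop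
  have hlim : Tendsto (fun s => c + (s - a) ^ n * r s) (𝓝[≠] a) (𝓝 c) := by
    simpa [zero_pow hn] using hcont.tendsto.mono_left nhdsWithin_le_nhds
  refine hlim.congr' ?_
  filter_upwards [hU, self_mem_nhdsWithin] with s hsU hsa
  have hpow : (s - a) ^ n ≠ 0 := pow_ne_zero n (sub_ne_zero.2 hsa)
  rw [hq hsU]
  field_simp

end PolePart

theorem sq_eq_four_mul_of_tendsto_scaled {t₀ c β : ℂ} (ht₀ : t₀ ≠ 0) (hc : c ≠ 0)
    {A B C : ℂ → ℂ} (hA : Tendsto A (𝓝[≠] t₀) (𝓝 c)) (hB : Tendsto B (𝓝[≠] t₀) (𝓝 (-c)))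
    (hC : Tendsto C (𝓝[≠] t₀) (𝓝 (2 * c)))
    (hscaled : ∀ᶠ t in 𝓝[≠] t₀,
      t * (A t ^ 2 - (t - t₀) ^ 2) * ((t - t₀) * B t + t * C t)
        = A t * (t * B t) ^ 2 + (1 / 4) * (t - β) * (t - t₀) ^ 4 * A t
          + (1 / 4) * t * A t ^ 3 * (A t ^ 2 - 2 * (t - t₀) ^ 2)) :
    c ^ 2 = 4 * t₀ := by
  have hid : Tendsto (fun t : ℂ => t) (𝓝[≠] t₀) (𝓝 t₀) := nhdsWithin_le_nhds
  have hε : Tendsto (fun t : ℂ => t - t₀) (𝓝[≠] t₀) (𝓝 0) := by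
    simpa using hid.sub_const t₀
  have hlhs := (hid.mul ((hA.pow 2).sub (hε.pow 2))).mul ((hε.mul hB).add (hid.mul hC))
  have hrhs := ((hA.mul ((hid.mul hB).pow 2)).add
    ((((tendsto_const_nhds (x := (1 / 4 : ℂ))).mul (hid.sub_const β)).mul (hε.pow 4)).mul
      hA)).add
    ((((tendsto_const_nhds (x := (1 / 4 : ℂ))).mul hid).mul (hA.pow 3)).mul
      ((hA.pow 2).sub ((tendsto_const_nhds (x := (2 : ℂ))).mul (hε.pow 2))))
  have hbalance := tendsto_nhds_unique (hlhs.congr' hscaled) hrhs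
  have hfactor : t₀ * c ^ 3 * (c ^ 2 - 4 * t₀) = 0 := by
    linear_combination (-4 : ℂ) * hbalance
  simpa [ht₀, hc, sub_eq_zero] using hfactor

theorem pole_coefficient_constraint_general
    (t₀ : ℝ) (ht₀ : 0 < t₀) (α : ℝ) (c : ℂ) (hc : c ≠ 0)
    (ρ : ℝ) (hρ : 0 < ρ) (q r : ℂ → ℂ)
    (hr : AnalyticOnNhd ℂ r (Metric.ball (t₀ : ℂ) ρ))
    (hqdef : ∀ t ∈ Metric.ball (t₀ : ℂ) ρ \ {(t₀ : ℂ)}, q t = c / (t - (t₀ : ℂ)) + r t)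
    (hODE : ∀ t ∈ Metric.ball (t₀ : ℂ) ρ \ {(t₀ : ℂ)},
      t * ((q t) ^ 2 - 1) * deriv (fun s => s * deriv q s) t
        = q t * (t * deriv q t) ^ 2 + (1 / 4) * (t - (α : ℂ) ^ 2) * q t
          + (1 / 4) * t * (q t) ^ 3 * ((q t) ^ 2 - 2)) :
    c ^ 2 = 4 * (t₀ : ℂ) := by
  set U := ball (t₀ : ℂ) ρ \ {(t₀ : ℂ)}
  have hU : IsOpen U := isOpen_ball.sdiff isClosed_singleton
  have ht₀U : (t₀ : ℂ) ∉ U := fun h => h.2 rfl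
  have hUnhds : U ∈ 𝓝[≠] (t₀ : ℂ) := sdiff_mem_nhdsWithin_compl (ball_mem_nhds _ hρ) _
  have hr₀ : (t₀ : ℂ) ∈ ball (t₀ : ℂ) ρ := mem_ball_self hρ
  have hq : EqOn q (fun s => c / (s - t₀) ^ 1 + r s) U := fun t ht => by
    simpa using hqdef t ht
  have hdq := hasDerivAt_of_eqOn_div_sub_pow_add hU ht₀U
    (hr.differentiableOn.mono sdiff_subset) hq
  have hq' : EqOn (deriv q) (fun s => -c / (s - t₀) ^ 2 + deriv r s) U := fun t ht => by
    simpa using (hdq ht).deriv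
  have hdq' := hasDerivAt_of_eqOn_div_sub_pow_add hU ht₀U
    (hr.deriv.differentiableOn.mono sdiff_subset) hq'
  have hq'' : EqOn (deriv (deriv q)) (fun s => 2 * c / (s - t₀) ^ 3 + deriv (deriv r) s) U :=
    fun t ht => by simpa using (hdq' ht).deriv
  have hA := tendsto_sub_pow_mul_of_eqOn_div_sub_pow_add one_ne_zero hUnhds
    (hr _ hr₀).continuousAt hq
  have hB := tendsto_sub_pow_mul_of_eqOn_div_sub_pow_add two_ne_zero hUnhds
    (hr.deriv _ hr₀).continuousAt hq'
  have hC := tendsto_sub_pow_mul_of_eqOn_div_sub_pow_add three_ne_zero hUnhds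
    (hr.deriv.deriv _ hr₀).continuousAt hq''
  refine sq_eq_four_mul_of_tendsto_scaled (β := (α : ℂ) ^ 2) (by exact_mod_cast ht₀.ne') hc
    hA hB hC ?_
  filter_upwards [hUnhds] with t ht
  have hD : deriv (fun s => s * deriv q s) t = deriv q t + t * deriv (deriv q) t := by
    rw [deriv_fun_mul differentiableAt_fun_id (hdq' ht).differentiableAt, deriv_id'', one_mul]
  have hODEt := hODE t ht
  rw [hD] at hODEt
  linear_combination (t - t₀) ^ 5 * hODEt

/-- if `q(t) = c/(t-t₀) + O(t-t₀)` is meromorphic near `t₀ > 0` with a simple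
pole (`c ≠ 0`) and satisfies
`t(q²-1)(tq')' = q(tq')² + (1/4)(t-α²)q + (1/4)tq³(q²-2)`,
then matching the highest-order pole terms forces `c² = 4t₀`. -/
theorem pole_coefficient_constraint
    (t₀ : ℝ) (ht₀ : 0 < t₀) (α : ℝ) (c : ℂ) (hc : c ≠ 0)
    (ρ : ℝ) (hρ : 0 < ρ) (q r : ℂ → ℂ)
    (hr : AnalyticOnNhd ℂ r (Metric.ball (t₀ : ℂ) ρ))
    (hrO : r =O[nhdsWithin (t₀ : ℂ) {(t₀ : ℂ)}ᶜ] fun t => t - (t₀ : ℂ))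
    (hqdef : ∀ t ∈ Metric.ball (t₀ : ℂ) ρ \ {(t₀ : ℂ)}, q t = c / (t - (t₀ : ℂ)) + r t)
    (hODE : ∀ t ∈ Metric.ball (t₀ : ℂ) ρ \ {(t₀ : ℂ)},
      t * ((q t) ^ 2 - 1) * deriv (fun s => s * deriv q s) t
        = q t * (t * deriv q t) ^ 2 + (1 / 4) * (t - (α : ℂ) ^ 2) * q t
          + (1 / 4) * t * (q t) ^ 3 * ((q t) ^ 2 - 2)) :
    c ^ 2 = 4 * (t₀ : ℂ) :=
  pole_coefficient_constraint_general t₀ ht₀ α c hc ρ hρ q r hr hqdef hODE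
end

section
/- Let q be holomorphic near t_k > 0 with q(t_k) = ε ∈ {+1,-1} and q(t) = ε + d_k(t-t_k) + O((t-t_k)²) where d_k ≠ 0, and suppose q satisfies t(q²-1)(tq_t)_t = q(tq_t)² + (1/4)(t-α²)q + (1/4)tq³(q²-2). Then d_k²·t_k² = α²/4. -/
/-!
At `t_k` the factor `q² - 1` vanishes, so the second-order term drops out of the equation.
Since `q(t_k) = ε` with `ε² = 1` and the Taylor expansion gives `q'(t_k) = d_k`, what is
left is `ε (d_k² t_k² - α²/4) = 0`.
-/

open Asymptotics Filter Topology

theorem hasDerivAt_of_sub_linear_isBigO_sq {𝕜 E : Type*} [NontriviallyNormedField 𝕜]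
    [NormedAddCommGroup E] [NormedSpace 𝕜 E] {f : 𝕜 → E} {d : E} {a : 𝕜}
    (h : (fun t => f t - (f a + (t - a) • d)) =O[𝓝 a] fun t => (t - a) ^ 2) :
    HasDerivAt f d a := by
  have hsq : (fun t => (t - a) ^ 2) =o[𝓝 a] fun t => t - a := by
    refine isLittleO_norm_left.mp ?_
    simpa only [norm_pow] using isLittleO_pow_sub_sub a one_lt_two
  rw [hasDerivAt_iff_isLittleO]
  simpa only [sub_sub] using h.trans_isLittleO hsq

theorem sq_mul_sq_eq_of_painleveV_of_eq_one_or_eq_neg_one {t y y' y'' α : ℂ}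
    (hy : y = 1 ∨ y = -1)
    (h : t * (y ^ 2 - 1) * y'' = y * (t * y') ^ 2 + (1 / 4) * (t - α ^ 2) * y
      + (1 / 4) * t * y ^ 3 * (y ^ 2 - 2)) :
    y' ^ 2 * t ^ 2 = α ^ 2 / 4 := by
  rcases hy with rfl | rfl
  · linear_combination -h
  · linear_combination h

theorem taylor_coefficient_constraint_general
    (tk : ℝ) (α : ℝ) (ε : ℂ) (hε : ε = 1 ∨ ε = -1)
    (d : ℂ) (ρ : ℝ) (hρ : 0 < ρ) (q : ℂ → ℂ)
    (hval : q (tk : ℂ) = ε)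
    (hTaylor : (fun t => q t - (ε + d * (t - (tk : ℂ)))) =O[nhds (tk : ℂ)]
      fun t => (t - (tk : ℂ)) ^ 2)
    (hODE : ∀ t ∈ Metric.ball (tk : ℂ) ρ,
      t * ((q t) ^ 2 - 1) * deriv (fun s => s * deriv q s) t
        = q t * (t * deriv q t) ^ 2 + (1 / 4) * (t - (α : ℂ) ^ 2) * q t
          + (1 / 4) * t * (q t) ^ 3 * ((q t) ^ 2 - 2)) :
    d ^ 2 * (tk : ℂ) ^ 2 = (α : ℂ) ^ 2 / 4 := by
  have hderiv : HasDerivAt q d tk :=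
    hasDerivAt_of_sub_linear_isBigO_sq (by simpa only [hval, smul_eq_mul, mul_comm] using hTaylor)
  have hODE_tk := hODE tk (Metric.mem_ball_self hρ)
  rw [hval, hderiv.deriv] at hODE_tk
  exact sq_mul_sq_eq_of_painleveV_of_eq_one_or_eq_neg_one hε hODE_tk

/-- if `q` is holomorphic near `t_k > 0` with `q(t_k) = ε ∈ {±1}`,
`q(t) = ε + d_k(t-t_k) + O((t-t_k)²)`, `d_k ≠ 0`, and `q` satisfies
`t(q²-1)(tq')' = q(tq')² + (1/4)(t-α²)q + (1/4)tq³(q²-2)`, then `d_k² t_k² = α²/4`. -/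
theorem taylor_coefficient_constraint
    (tk : ℝ) (htk : 0 < tk) (α : ℝ) (ε : ℂ) (hε : ε = 1 ∨ ε = -1)
    (d : ℂ) (hd : d ≠ 0) (ρ : ℝ) (hρ : 0 < ρ) (q : ℂ → ℂ)
    (hq : AnalyticOnNhd ℂ q (Metric.ball (tk : ℂ) ρ))
    (hval : q (tk : ℂ) = ε)
    (hTaylor : (fun t => q t - (ε + d * (t - (tk : ℂ)))) =O[nhds (tk : ℂ)]
      fun t => (t - (tk : ℂ)) ^ 2)
    (hODE : ∀ t ∈ Metric.ball (tk : ℂ) ρ,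
      t * ((q t) ^ 2 - 1) * deriv (fun s => s * deriv q s) t
        = q t * (t * deriv q t) ^ 2 + (1 / 4) * (t - (α : ℂ) ^ 2) * q t
          + (1 / 4) * t * (q t) ^ 3 * ((q t) ^ 2 - 2)) :
    d ^ 2 * (tk : ℂ) ^ 2 = (α : ℂ) ^ 2 / 4 :=
  taylor_coefficient_constraint_general tk α ε hε d ρ hρ q hval hTaylor hODE
end

section
/- With H_H(q,p,t,α) = ((q²-1)/(4t))p² - α²q²/(4t(q²-1)) - q²/4, the Hamiltonian system q_t = ∂H_H/∂p, p_t = -∂H_H/∂q implies that q satisfies the second-order ODE t(q²-1)(tq_t)_t = q(tq_t)² + (1/4)(t-α²)q + (1/4)tq³(q²-2), provided q² ≠ 1 and p = 2tq_t/(q²-1). -/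
/-- with `H_H(q,p,t,α) = ((q²-1)/(4t))p² - α²q²/(4t(q²-1)) - q²/4`, the
Hamiltonian system `q_t = ∂H_H/∂p = (q²-1)p/(2t)`, `p_t = -∂H_H/∂q`, with `q² ≠ 1` and
`p = 2tq_t/(q²-1)`, implies the second-order ODE
`t(q²-1)(tq')' = q(tq')² + (1/4)(t-α²)q + (1/4)tq³(q²-2)` on `(0,∞)`. -/
theorem hamiltonian_implies_hard_edge_ODE
    (α : ℝ) (q p : ℝ → ℝ)
    (hq2 : ∀ t : ℝ, 0 < t → (q t) ^ 2 ≠ 1)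
    (hq : ∀ t : ℝ, 0 < t → HasDerivAt q (((q t) ^ 2 - 1) * p t / (2 * t)) t)
    (hp : ∀ t : ℝ, 0 < t → HasDerivAt p
      (-(q t * (p t) ^ 2 / (2 * t) + α ^ 2 * q t / (2 * t * ((q t) ^ 2 - 1) ^ 2) - q t / 2)) t)
    (hpq : ∀ t : ℝ, 0 < t → p t = 2 * t * deriv q t / ((q t) ^ 2 - 1)) :
    ∀ t : ℝ, 0 < t →
      t * ((q t) ^ 2 - 1) * deriv (fun s => s * deriv q s) t
        = q t * (t * deriv q t) ^ 2 + (1 / 4) * (t - α ^ 2) * q t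
          + (1 / 4) * t * (q t) ^ 3 * ((q t) ^ 2 - 2) := by
  intro t ht
  have ht0 : (t : ℝ) ≠ 0 := ne_of_gt ht
  have hq2t : (q t) ^ 2 - 1 ≠ 0 := sub_ne_zero.mpr (hq2 t ht)
  have h1 : ∀ s, 0 < s → s * deriv q s = ((q s) ^ 2 - 1) * p s / 2 := by
    intro s hs
    rw [(hq s hs).deriv]
    field_simp
  have hev : (fun s => s * deriv q s) =ᶠ[nhds t] (fun s => ((q s) ^ 2 - 1) * p s / 2) := by
    filter_upwards [eventually_gt_nhds ht] with s hs using h1 s hs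
  have hder : HasDerivAt (fun s => ((q s) ^ 2 - 1) * p s / 2)
      (((2 * q t ^ 1 * (((q t) ^ 2 - 1) * p t / (2 * t))) * p t
        + ((q t) ^ 2 - 1) *
          (-(q t * (p t) ^ 2 / (2 * t) + α ^ 2 * q t / (2 * t * ((q t) ^ 2 - 1) ^ 2) - q t / 2))) / 2) t := by
    exact ((((hq t ht).pow 2).sub_const 1).mul (hp t ht)).div_const 2
  have hdg : deriv (fun s => s * deriv q s) t
      = ((2 * q t ^ 1 * (((q t) ^ 2 - 1) * p t / (2 * t))) * p t
        + ((q t) ^ 2 - 1) *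
          (-(q t * (p t) ^ 2 / (2 * t) + α ^ 2 * q t / (2 * t * ((q t) ^ 2 - 1) ^ 2) - q t / 2))) / 2 := by
    rw [Filter.EventuallyEq.deriv_eq hev, hder.deriv]
  rw [hdg, (hq t ht).deriv]
  field_simp
  ring
end

section
/- Suppose ω : (0,∞) → ℂ is defined by ω(t) = exp(p(t/2)) where (q,p) solve q' = ∂H_B/∂p, p' = -∂H_B/∂q with H_B(q,p,t) = -4iq + (4/t)q²sinh²(p/2), with q nonvanishing. Then ω satisfies the Painlevé V equation ω'' = (ω')²·(3ω-1)/(2ω(ω-1)) + 2ω(ω+1)/(ω-1) + 2iω/t - ω'/t. -/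
open Complex Topology

/-!
Rescale time so that `ω(t) = exp (p (t/2))` and `s(t) = q (t/2)`. Since
`4 e^z sinh² (z/2) = (e^z - 1)²` and `4 e^z sinh (z/2) cosh (z/2) = e^{2z} - 1`, the Hamiltonian
system becomes the rational system `ω' = 2iω - (2/t) s (ω - 1)²`, `s' = s² (ω² - 1) / (t ω)`.
Differentiating the first equation once more and eliminating `s` through the first equation
itself (possible since `ω ≠ 1`) leaves the Painlevé V equation.
-/

theorem HasDerivAt.comp_div_const {f : ℝ → ℂ} {f' : ℂ} {t : ℝ} (c : ℝ)
    (hf : HasDerivAt f f' (t / c)) : HasDerivAt (fun τ => f (τ / c)) (f' / c) t := by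
  have h := hf.scomp t ((hasDerivAt_id t).div_const c)
  rwa [real_smul, one_div, ofReal_inv, mul_comm, ← div_eq_mul_inv] at h

namespace Complex

theorem exp_eq_cosh_half_add_sinh_half_sq (z : ℂ) :
    exp z = (cosh (z / 2) + sinh (z / 2)) ^ 2 := by
  rw [cosh_add_sinh, ← exp_nat_mul]
  ring_nf

theorem four_mul_exp_mul_sinh_half_sq (z : ℂ) :
    4 * exp z * sinh (z / 2) ^ 2 = (exp z - 1) ^ 2 := by
  rw [exp_eq_cosh_half_add_sinh_half_sq]
  set c := cosh (z / 2)
  set s := sinh (z / 2)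
  linear_combination (-(4 * s ^ 2 + 4 * c * s + (c ^ 2 - s ^ 2 - 1))) * cosh_sq_sub_sinh_sq (z / 2)

theorem four_mul_exp_mul_sinh_half_mul_cosh_half (z : ℂ) :
    4 * exp z * (sinh (z / 2) * cosh (z / 2)) = exp z ^ 2 - 1 := by
  rw [exp_eq_cosh_half_add_sinh_half_sq]
  set c := cosh (z / 2)
  set s := sinh (z / 2)
  linear_combination (-(c ^ 2 - s ^ 2 + 1)) * cosh_sq_sub_sinh_sq (z / 2)

end Complex

noncomputable def painleveVRhs (t w w' : ℂ) : ℂ :=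
  w' ^ 2 * (3 * w - 1) / (2 * w * (w - 1)) + 2 * w * (w + 1) / (w - 1) + 2 * I * w / t - w' / t

theorem deriv_deriv_eq_painleveVRhs {ω s : ℝ → ℂ} {t : ℝ} (ht : 0 < t)
    (hω : ∀ τ, 0 < τ → HasDerivAt ω (2 * I * ω τ - 2 / τ * s τ * (ω τ - 1) ^ 2) τ)
    (hs : HasDerivAt s (s t ^ 2 * (ω t ^ 2 - 1) / (t * ω t)) t)
    (hω0 : ω t ≠ 0) (hω1 : ω t ≠ 1) :
    deriv (deriv ω) t = painleveVRhs t (ω t) (deriv ω t) := by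
  have htc : (t : ℂ) ≠ 0 := ofReal_ne_zero.mpr ht.ne'
  have hω1' : ω t - 1 ≠ 0 := sub_ne_zero.mpr hω1
  have hderiv : deriv ω =ᶠ[𝓝 t] fun τ => 2 * I * ω τ - 2 / τ * s τ * (ω τ - 1) ^ 2 := by
    filter_upwards [eventually_gt_nhds ht] with τ hτ using (hω τ hτ).deriv
  have hωt := hω t ht
  have hω'' := (hωt.const_mul (2 * I)).fun_sub
    ((((hasDerivAt_const t (2 : ℂ)).fun_div (hasDerivAt_id' (t : ℂ)).comp_ofReal htc).fun_mul
      hs).fun_mul ((hωt.sub_const 1).fun_pow 2))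
  rw [hderiv.deriv_eq, hω''.deriv, hωt.deriv, painleveVRhs]
  field_simp
  linear_combination -2 * ω t ^ 2 * (t : ℂ) ^ 2 * (ω t + 1) * I_sq

theorem hasDerivAt_exp_comp_half {p q : ℝ → ℂ} {t : ℝ} (ht : t ≠ 0)
    (hp : HasDerivAt p
      (4 * I - 8 / ((t / 2 : ℝ) : ℂ) * q (t / 2) * sinh (p (t / 2) / 2) ^ 2) (t / 2)) :
    HasDerivAt (fun τ => exp (p (τ / 2)))
      (2 * I * exp (p (t / 2)) - 2 / t * q (t / 2) * (exp (p (t / 2)) - 1) ^ 2) t := by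
  convert (hp.comp_div_const 2).cexp using 1
  have htc : (t : ℂ) ≠ 0 := ofReal_ne_zero.mpr ht
  push_cast
  field_simp
  linear_combination 4 * q (t / 2) * four_mul_exp_mul_sinh_half_sq (p (t / 2))

theorem hasDerivAt_comp_half {p q : ℝ → ℂ} {t : ℝ} (ht : t ≠ 0)
    (hq : HasDerivAt q (4 / ((t / 2 : ℝ) : ℂ) * q (t / 2) ^ 2 * sinh (p (t / 2) / 2)
      * cosh (p (t / 2) / 2)) (t / 2)) :
    HasDerivAt (fun τ => q (τ / 2))
      (q (t / 2) ^ 2 * (exp (p (t / 2)) ^ 2 - 1) / (t * exp (p (t / 2)))) t := by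
  convert hq.comp_div_const 2 using 1
  have htc : (t : ℂ) ≠ 0 := ofReal_ne_zero.mpr ht
  have he : exp (p (t / 2)) ≠ 0 := exp_ne_zero _
  push_cast
  field_simp
  linear_combination -q (t / 2) ^ 2 * four_mul_exp_mul_sinh_half_mul_cosh_half (p (t / 2))

theorem omega_satisfies_painleveV_general
    (q p : ℝ → ℂ)
    (hq : ∀ t : ℝ, 0 < t → HasDerivAt q
      ((4 / (t : ℂ)) * (q t) ^ 2 * Complex.sinh (p t / 2) * Complex.cosh (p t / 2)) t)
    (hp : ∀ t : ℝ, 0 < t → HasDerivAt p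
      (4 * Complex.I - (8 / (t : ℂ)) * q t * (Complex.sinh (p t / 2)) ^ 2) t)
    (hω1 : ∀ t : ℝ, 0 < t → Complex.exp (p (t / 2)) ≠ 1) :
    ∀ t : ℝ, 0 < t →
      deriv (deriv (fun τ : ℝ => Complex.exp (p (τ / 2)))) t
        = (deriv (fun τ : ℝ => Complex.exp (p (τ / 2))) t) ^ 2
            * (3 * Complex.exp (p (t / 2)) - 1)
            / (2 * Complex.exp (p (t / 2)) * (Complex.exp (p (t / 2)) - 1))
          + 2 * Complex.exp (p (t / 2)) * (Complex.exp (p (t / 2)) + 1)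
            / (Complex.exp (p (t / 2)) - 1)
          + 2 * Complex.I * Complex.exp (p (t / 2)) / (t : ℂ)
          - deriv (fun τ : ℝ => Complex.exp (p (τ / 2))) t / (t : ℂ) := by
  intro t ht
  exact deriv_deriv_eq_painleveVRhs (ω := fun τ => exp (p (τ / 2))) (s := fun τ => q (τ / 2)) ht
    (fun τ hτ => hasDerivAt_exp_comp_half hτ.ne' (hp _ (half_pos hτ)))
    (hasDerivAt_comp_half ht.ne' (hq _ (half_pos ht))) (exp_ne_zero _) (hω1 t ht)

/-- if `(q,p)` solve the bulk Hamiltonian system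
`q_t = (4/t)q² sinh(p/2)cosh(p/2)`, `p_t = 4i - (8/t)q sinh²(p/2)` (for
`H_B(q,p,t) = -4iq + (4/t)q² sinh²(p/2)`), with `q` nonvanishing, then
`ω(t) = exp(p(t/2))` satisfies the Painlevé V equation
`ω'' = (ω')²(3ω-1)/(2ω(ω-1)) + 2ω(ω+1)/(ω-1) + 2iω/t - ω'/t`. -/
theorem omega_satisfies_painleveV
    (q p : ℝ → ℂ)
    (hq : ∀ t : ℝ, 0 < t → HasDerivAt q
      ((4 / (t : ℂ)) * (q t) ^ 2 * Complex.sinh (p t / 2) * Complex.cosh (p t / 2)) t)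
    (hp : ∀ t : ℝ, 0 < t → HasDerivAt p
      (4 * Complex.I - (8 / (t : ℂ)) * q t * (Complex.sinh (p t / 2)) ^ 2) t)
    (hp2 : ∀ t : ℝ, 0 < t → DifferentiableAt ℝ (deriv p) t)
    (hq0 : ∀ t : ℝ, 0 < t → q t ≠ 0)
    (hω1 : ∀ t : ℝ, 0 < t → Complex.exp (p (t / 2)) ≠ 1) :
    ∀ t : ℝ, 0 < t →
      deriv (deriv (fun τ : ℝ => Complex.exp (p (τ / 2)))) t
        = (deriv (fun τ : ℝ => Complex.exp (p (τ / 2))) t) ^ 2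
            * (3 * Complex.exp (p (t / 2)) - 1)
            / (2 * Complex.exp (p (t / 2)) * (Complex.exp (p (t / 2)) - 1))
          + 2 * Complex.exp (p (t / 2)) * (Complex.exp (p (t / 2)) + 1)
            / (Complex.exp (p (t / 2)) - 1)
          + 2 * Complex.I * Complex.exp (p (t / 2)) / (t : ℂ)
          - deriv (fun τ : ℝ => Complex.exp (p (τ / 2))) t / (t : ℂ) :=
  omega_satisfies_painleveV_general q p hq hp hω1
end
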